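/- arXiv:1509.03855 — 2 statements merged into one kernel-verified Lean document; each statement's English description precedes it below -/
import Mathlib

section
/- Let X be a graph and x, y vertices of X. If the girth of X is greater than 2Δ + 4, then any two non-degenerate paths from x to y of length at most Δ + 1 are equal. Here a path of length n is a graph homomorphism φ : L_n → X with φ(0) = x and φ(n) = y, where L_n is the path graph on vertices {0,...,n} with edges between consecutive integers, and φ is non-degenerate if there is no i ∈ {1,...,n−1} with φ(i−1) = φ(i+1). -/
/-- A graph: a symmetric relation on a vertex type (loops allowed). -/
structure SymRelGraph (V : Type*) where
  adj : V → V → Prop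
  symm : ∀ {x y : V}, adj x y → adj y x

variable {V : Type*}

/-- `X` has an embedded cycle of length `n`: an injective graph homomorphism
from the cycle graph `C_n`. -/
def HasCycle (X : SymRelGraph V) (n : ℕ) : Prop :=
  ∃ φ : ZMod n → V, Function.Injective φ ∧ ∀ i, X.adj (φ i) (φ (i + 1))

/-- The girth of `X` is greater than `m`: `X` has no loops and no embedded
cycle of length at most `m`. -/
def GirthGT (X : SymRelGraph V) (m : ℕ) : Prop :=
  (∀ v, ¬ X.adj v v) ∧ ∀ n, 3 ≤ n → n ≤ m → ¬ HasCycle X n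

/-- `φ` restricted to `{0,…,n}` is a walk (a graph homomorphism `L_n → X`). -/
def IsWalk (X : SymRelGraph V) (φ : ℕ → V) (n : ℕ) : Prop :=
  ∀ i < n, X.adj (φ i) (φ (i + 1))

/-- `φ : L_n → X` is non-degenerate: there is no `i ∈ {1,…,n-1}` with
`φ (i-1) = φ (i+1)`. -/
def NonDegenerate (φ : ℕ → V) (n : ℕ) : Prop :=
  ∀ i, 1 ≤ i → i + 1 ≤ n → φ (i - 1) ≠ φ (i + 1)

/-!
A non-degenerate closed walk of length `ℓ` either visits `ℓ` distinct vertices, and is then an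
embedded cycle (or a loop, or a backtrack when `ℓ ≤ 2`), or it revisits a vertex and contains a
shorter non-degenerate closed walk; so below the girth there are none. Two distinct non-degenerate
walks from `x` to `y` can be peeled from the end while their last steps agree; once they differ,
the first walk followed by the reverse of the second is a non-degenerate closed walk of length
`n₁ + n₂ ≤ 2Δ + 2`, which is impossible.
-/

variable {X : SymRelGraph V}

def walkReverse (φ : ℕ → V) (n : ℕ) : ℕ → V := fun i => φ (n - i)

def walkAppend (φ : ℕ → V) (n : ℕ) (ψ : ℕ → V) : ℕ → V :=
  fun i => if i ≤ n then φ i else ψ (i - n)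

theorem walkAppend_of_le {φ ψ : ℕ → V} {n i : ℕ} (hi : i ≤ n) : walkAppend φ n ψ i = φ i :=
  if_pos hi

theorem walkAppend_of_ge {φ ψ : ℕ → V} {n i : ℕ} (hφψ : φ n = ψ 0) (hi : n ≤ i) :
    walkAppend φ n ψ i = ψ (i - n) := by
  rcases hi.eq_or_lt with rfl | hi
  · rw [walkAppend_of_le le_rfl, Nat.sub_self, hφψ]
  · exact if_neg hi.not_ge

namespace IsWalk

variable {φ ψ : ℕ → V} {m n : ℕ}

theorem mono (hw : IsWalk X φ n) (hmn : m ≤ n) : IsWalk X φ m :=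
  fun i hi => hw i (by omega)

theorem shift (a : ℕ) (hw : IsWalk X φ (a + n)) : IsWalk X (fun j => φ (a + j)) n :=
  fun i hi => hw (a + i) (by omega)

theorem reverse (hw : IsWalk X φ n) : IsWalk X (walkReverse φ n) n := by
  intro i hi
  have h := X.symm (hw (n - (i + 1)) (by omega))
  rwa [show n - (i + 1) + 1 = n - i by omega] at h

theorem append (hφψ : φ n = ψ 0) (hφ : IsWalk X φ n) (hψ : IsWalk X ψ m) :
    IsWalk X (walkAppend φ n ψ) (n + m) := by
  intro i hi
  rcases Nat.lt_or_ge i n with h | h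
  · rw [walkAppend_of_le h.le, walkAppend_of_le h]
    exact hφ i h
  · rw [walkAppend_of_ge hφψ h, walkAppend_of_ge hφψ (by omega), show i + 1 - n = i - n + 1 by omega]
    exact hψ (i - n) (by omega)

end IsWalk

namespace NonDegenerate

variable {φ ψ : ℕ → V} {m n : ℕ}

theorem mono (hnd : NonDegenerate φ n) (hmn : m ≤ n) : NonDegenerate φ m :=
  fun i hi1 hi2 => hnd i hi1 (by omega)

theorem shift (a : ℕ) (hnd : NonDegenerate φ (a + n)) : NonDegenerate (fun j => φ (a + j)) n := by
  intro i hi1 hi2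
  have h := hnd (a + i) (by omega) (by omega)
  rwa [show a + i - 1 = a + (i - 1) by omega, show a + i + 1 = a + (i + 1) by omega] at h

theorem reverse (hnd : NonDegenerate φ n) : NonDegenerate (walkReverse φ n) n := by
  intro i hi1 hi2
  have h := hnd (n - i) (by omega) (by omega)
  rw [show n - i - 1 = n - (i + 1) by omega, show n - i + 1 = n - (i - 1) by omega] at h
  exact h.symm

theorem append (hφψ : φ n = ψ 0) (hjoin : φ (n - 1) ≠ ψ 1) (hφ : NonDegenerate φ n)
    (hψ : NonDegenerate ψ m) : NonDegenerate (walkAppend φ n ψ) (n + m) := by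
  intro i hi1 hi2
  rcases Nat.lt_or_ge i n with h | h
  · rw [walkAppend_of_le (by omega), walkAppend_of_le h]
    exact hφ i hi1 h
  rcases h.eq_or_lt with rfl | h
  · rwa [walkAppend_of_le (by omega), walkAppend_of_ge hφψ (by omega), Nat.add_sub_cancel_left]
  · rw [walkAppend_of_ge hφψ (by omega), walkAppend_of_ge hφψ (by omega),
      show i - 1 - n = i - n - 1 by omega, show i + 1 - n = i - n + 1 by omega]
    exact hψ (i - n) (by omega) (by omega)

end NonDegenerate

theorem hasCycle_of_injOn {ψ : ℕ → V} {n : ℕ} [NeZero n] (hw : IsWalk X ψ n) (hc : ψ n = ψ 0)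
    (hinj : Set.InjOn ψ (Set.Iio n)) : HasCycle X n := by
  refine ⟨fun i => ψ i.val, ?_, fun i => ?_⟩
  · intro i j hij
    exact ZMod.val_injective n (hinj (ZMod.val_lt i) (ZMod.val_lt j) hij)
  · have hsucc : (i + 1).val = (i.val + 1) % n := by
      rw [← ZMod.val_natCast, Nat.cast_add, ZMod.natCast_zmod_val, Nat.cast_one]
    have hi := ZMod.val_lt i
    change X.adj (ψ i.val) (ψ (i + 1).val)
    rcases (show i.val + 1 ≤ n from hi).lt_or_eq with h | h
    · rw [hsucc, Nat.mod_eq_of_lt h]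
      exact hw _ hi
    · rw [hsucc, h, Nat.mod_self, ← hc]
      simpa only [h] using hw _ hi

namespace GirthGT

variable {m : ℕ}

theorem endpoint_ne_of_injOn (hg : GirthGT X m) {ψ : ℕ → V} {ℓ : ℕ} (hℓ : 1 ≤ ℓ) (hℓm : ℓ ≤ m)
    (hw : IsWalk X ψ ℓ) (hnd : NonDegenerate ψ ℓ) (hinj : Set.InjOn ψ (Set.Iio ℓ)) :
    ψ ℓ ≠ ψ 0 := by
  intro hc
  match ℓ, hℓ with
  | 1, _ => exact hg.1 (ψ 0) (hc ▸ hw 0 one_pos)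
  | 2, _ => exact hnd 1 le_rfl le_rfl hc.symm
  | k + 3, _ =>
    have : NeZero (k + 3) := ⟨by omega⟩
    exact hg.2 (k + 3) (by omega) hℓm (hasCycle_of_injOn hw hc hinj)

theorem endpoint_ne (hg : GirthGT X m) {ψ : ℕ → V} {ℓ : ℕ} (hℓ : 1 ≤ ℓ) (hℓm : ℓ ≤ m)
    (hw : IsWalk X ψ ℓ) (hnd : NonDegenerate ψ ℓ) : ψ ℓ ≠ ψ 0 := by
  induction ℓ using Nat.strong_induction_on generalizing ψ with
  | _ ℓ ih =>
    by_cases hinj : Set.InjOn ψ (Set.Iio ℓ)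
    · exact hg.endpoint_ne_of_injOn hℓ hℓm hw hnd hinj
    obtain ⟨a, b, hab, hb, hrep⟩ : ∃ a b, a < b ∧ b < ℓ ∧ ψ a = ψ b := by
      simp only [Set.InjOn, Set.mem_Iio, not_forall] at hinj
      obtain ⟨a, ha, b, hb, hrep, hne⟩ := hinj
      rcases Nat.lt_or_gt_of_ne hne with h | h
      · exact ⟨a, b, h, hb, hrep⟩
      · exact ⟨b, a, h, ha, hrep.symm⟩
    have hlen : a + (b - a) = b := by omega
    have hsub := ih (b - a) (by omega) (ψ := fun j => ψ (a + j)) (by omega) (by omega)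
      ((hlen ▸ hw.mono hb.le).shift a) ((hlen ▸ hnd.mono hb.le).shift a)
    exact (hsub (by simp only [hlen, Nat.add_zero, hrep])).elim

theorem eq_of_nondegenerate (hg : GirthGT X m) {n₁ n₂ : ℕ} {φ₁ φ₂ : ℕ → V}
    (hm : n₁ + n₂ ≤ m) (hw₁ : IsWalk X φ₁ n₁) (hw₂ : IsWalk X φ₂ n₂)
    (hnd₁ : NonDegenerate φ₁ n₁) (hnd₂ : NonDegenerate φ₂ n₂)
    (h0 : φ₁ 0 = φ₂ 0) (he : φ₁ n₁ = φ₂ n₂) : n₁ = n₂ ∧ ∀ i ≤ n₁, φ₁ i = φ₂ i := by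
  induction n₁ generalizing n₂ with
  | zero =>
    obtain rfl : n₂ = 0 := by
      by_contra hn₂
      exact hg.endpoint_ne (by omega) (by omega) hw₂ hnd₂ (he.symm.trans h0)
    exact ⟨rfl, fun i hi => by rwa [Nat.le_zero.mp hi]⟩
  | succ k ih =>
    obtain ⟨j, rfl⟩ : ∃ j, n₂ = j + 1 := by
      refine Nat.exists_eq_succ_of_ne_zero fun hn₂ => ?_
      subst hn₂
      exact hg.endpoint_ne (by omega) (by omega) hw₁ hnd₁ (he.trans h0.symm)
    by_cases hlast : φ₁ k = φ₂ j
    · obtain ⟨rfl, hagree⟩ := ih (by omega) (hw₁.mono k.le_succ) (hw₂.mono j.le_succ)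
        (hnd₁.mono k.le_succ) (hnd₂.mono j.le_succ) hlast
      refine ⟨rfl, fun i hi => ?_⟩
      rcases hi.lt_or_eq with hi | rfl
      · exact hagree i (by omega)
      · exact he
    · have hrev : φ₁ (k + 1) = walkReverse φ₂ (j + 1) 0 := he
      have hclosed := hg.endpoint_ne (by omega) hm (hw₁.append hrev hw₂.reverse)
        (hnd₁.append hrev hlast hnd₂.reverse)
      refine (hclosed ?_).elim
      rw [walkAppend_of_ge hrev (by omega), walkAppend_of_le (Nat.zero_le _), h0]
      simp [walkReverse]

end GirthGT

theorem stmt_0_general (X : SymRelGraph V) (Δ : ℕ)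
    (hgirth : GirthGT X (2 * Δ + 4))
    (x y : V) (n₁ n₂ : ℕ) (φ₁ φ₂ : ℕ → V)
    (hn₁ : n₁ ≤ Δ + 1) (hn₂ : n₂ ≤ Δ + 1)
    (hw₁ : IsWalk X φ₁ n₁) (hw₂ : IsWalk X φ₂ n₂)
    (hnd₁ : NonDegenerate φ₁ n₁) (hnd₂ : NonDegenerate φ₂ n₂)
    (h0₁ : φ₁ 0 = x) (h0₂ : φ₂ 0 = x) (he₁ : φ₁ n₁ = y) (he₂ : φ₂ n₂ = y) :
    n₁ = n₂ ∧ ∀ i ≤ n₁, φ₁ i = φ₂ i :=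
  hgirth.eq_of_nondegenerate (by omega) hw₁ hw₂ hnd₁ hnd₂ (h0₁.trans h0₂.symm)
    (he₁.trans he₂.symm)

/-- If the girth of `X` is greater than `2Δ + 4`, then any two non-degenerate
paths from `x` to `y` of length at most `Δ + 1` are equal. -/
theorem stmt_0 (X : SymRelGraph V) (Δ : ℕ) (hΔ : 0 < Δ)
    (hgirth : GirthGT X (2 * Δ + 4))
    (x y : V) (n₁ n₂ : ℕ) (φ₁ φ₂ : ℕ → V)
    (hn₁ : n₁ ≤ Δ + 1) (hn₂ : n₂ ≤ Δ + 1)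
    (hw₁ : IsWalk X φ₁ n₁) (hw₂ : IsWalk X φ₂ n₂)
    (hnd₁ : NonDegenerate φ₁ n₁) (hnd₂ : NonDegenerate φ₂ n₂)
    (h0₁ : φ₁ 0 = x) (h0₂ : φ₂ 0 = x) (he₁ : φ₁ n₁ = y) (he₂ : φ₂ n₂ = y) :
    n₁ = n₂ ∧ ∀ i ≤ n₁, φ₁ i = φ₂ i :=
  stmt_0_general X Δ hgirth x y n₁ n₂ φ₁ φ₂ hn₁ hn₂ hw₁ hw₂ hnd₁ hnd₂ h0₁ h0₂ he₁ he₂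
end

section
/- Let G be a graph and e = ⟨v,w⟩ an edge of G such that there is no graph homomorphism φ : L_3 → G ∖ e with φ(0) = v and φ(3) = w (where G ∖ e is G with the edge e removed, and L_3 is the path on vertices 0,1,2,3). Then any element (σ, τ) of the box complex B(G) = Hom(K_2, G) with v ∈ σ, w ∈ τ, and σ containing a vertex other than v, satisfies τ = {w}. -/
/-- A graph: a symmetric relation on a vertex type (loops allowed). -/
structure SymmGraph (V : Type*) where
  adj : V → V → Prop
  symm : ∀ {x y : V}, adj x y → adj y x

variable {V : Type*}

/-- `f` is a graph homomorphism from `G` to `H`. -/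
def IsGraphHom {W : Type*} (G : SymmGraph V) (H : SymmGraph W) (f : V → W) : Prop :=
  ∀ {x y : V}, G.adj x y → H.adj (f x) (f y)

/-- The path graph `L₃` on vertices `0,1,2,3`, edges between consecutive
integers. -/
def L3 : SymmGraph (Fin 4) where
  adj i j := (i : ℕ) + 1 = j ∨ (j : ℕ) + 1 = i
  symm h := h.symm

/-- The graph `G ∖ e` obtained from `G` by deleting the edge `e = ⟨v,w⟩`. -/
def delEdge (G : SymmGraph V) (v w : V) : SymmGraph V where
  adj x y := G.adj x y ∧ ¬ ((x = v ∧ y = w) ∨ (x = w ∧ y = v))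
  symm h := ⟨G.symm h.1, fun hc => h.2 (by tauto)⟩

theorem delEdge_adj_of_ne_left {G : SymmGraph V} {v w x y : V} (h : G.adj x y)
    (hx : x ≠ v) (hy : y ≠ v) : (delEdge G v w).adj x y :=
  ⟨h, by tauto⟩

theorem delEdge_adj_of_ne_right {G : SymmGraph V} {v w x y : V} (h : G.adj x y)
    (hx : x ≠ w) (hy : y ≠ w) : (delEdge G v w).adj x y :=
  ⟨h, by tauto⟩

theorem isGraphHom_L3_of_adj {W : Type*} {H : SymmGraph W} {a b c d : W}
    (hab : H.adj a b) (hbc : H.adj b c) (hcd : H.adj c d) :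
    IsGraphHom L3 H ![a, b, c, d] := by
  intro i j hij
  fin_cases i <;> fin_cases j <;> simp [L3] at hij ⊢ <;> first
    | assumption
    | exact H.symm ‹_›

theorem stmt_4_general (G : SymmGraph V) (v w : V)
    (hlv : ¬ G.adj v v)
    (hL : ¬ ∃ f : Fin 4 → V, IsGraphHom L3 (delEdge G v w) f ∧ f 0 = v ∧ f 3 = w)
    (σ τ : Set V)
    (hmh : ∀ a ∈ σ, ∀ b ∈ τ, G.adj a b)
    (hv : v ∈ σ) (hw : w ∈ τ) (x : V) (hx : x ∈ σ) (hxv : x ≠ v) :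
    τ = {w} := by
  have hvw : v ≠ w := fun h => hlv (h ▸ hmh v hv w hw)
  refine Set.eq_singleton_iff_unique_mem.2 ⟨hw, fun y hy => by_contra fun hyw => ?_⟩
  have hyv : y ≠ v := fun h => hlv (h ▸ hmh v hv y hy)
  -- `v, y, x, w` is a path of length three avoiding the edge `vw`.
  refine hL ⟨![v, y, x, w], isGraphHom_L3_of_adj ?_ ?_ ?_, rfl, rfl⟩
  · exact delEdge_adj_of_ne_right (hmh v hv y hy) hvw hyw
  · exact delEdge_adj_of_ne_left (G.symm (hmh x hx y hy)) hyv hxv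
  · exact delEdge_adj_of_ne_left (hmh x hx w hw) hxv hvw.symm

/-- Suppose there is no graph homomorphism `L₃ → G ∖ e` sending `0 ↦ v` and
`3 ↦ w`, where `e = ⟨v,w⟩` is an edge of the (loopless at `v,w`) graph `G`.
Then any element `(σ,τ)` of the box complex `B(G) = Hom(K₂,G)` with `v ∈ σ`,
`w ∈ τ` and `σ` containing a vertex other than `v` satisfies `τ = {w}`. -/
theorem stmt_4 (G : SymmGraph V) (v w : V) (he : G.adj v w)
    (hlv : ¬ G.adj v v) (hlw : ¬ G.adj w w)
    (hL : ¬ ∃ f : Fin 4 → V, IsGraphHom L3 (delEdge G v w) f ∧ f 0 = v ∧ f 3 = w)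
    (σ τ : Set V) (hσ : σ.Nonempty) (hτ : τ.Nonempty)
    (hmh : ∀ a ∈ σ, ∀ b ∈ τ, G.adj a b)
    (hv : v ∈ σ) (hw : w ∈ τ) (x : V) (hx : x ∈ σ) (hxv : x ≠ v) :
    τ = {w} :=
  stmt_4_general G v w hlv hL σ τ hmh hv hw x hx hxv
end
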